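/- arXiv:2406.16421 — 4 statements merged into one kernel-verified Lean document; each statement's English description precedes it below -/
import Mathlib

section
/- Let J ⊆ T = A[[x₁,…,xₙ]][[t]] be an ideal generated by t-homogeneous elements (A a complete regular local ring). For F ∈ T with t-homogeneous decomposition F = ∑_{d∈ℤ} F_d, one has F ∈ J if and only if F_d ∈ J for all d ∈ ℤ. -/
noncomputable section

/-- `A` is a complete regular local ring. -/
def IsCompleteRegularLocal (A : Type*) [CommRing A] [IsLocalRing A] : Prop :=
  IsNoetherianRing A ∧ IsAdicComplete (IsLocalRing.maximalIdeal A) A ∧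
    ∃ s : Finset A, Ideal.span (s : Set A) = IsLocalRing.maximalIdeal A ∧
      ((s.card : ℕ∞) : WithBot ℕ∞) = ringKrullDim A

variable {A : Type*} [CommRing A] {n : ℕ}

/-- `F ∈ T = A[[x₁,…,xₙ]][[t]]` is `t`-homogeneous of degree `d ∈ ℤ`. -/
def tHomogeneous (d : ℤ) (F : PowerSeries (MvPowerSeries (Fin n) A)) : Prop :=
  ∀ (i : ℕ) (e : Fin n →₀ ℕ), ((e.sum fun _ v => v : ℕ) : ℤ) ≠ (i : ℤ) + d →
    MvPowerSeries.coeff (R := A) e (PowerSeries.coeff (R := MvPowerSeries (Fin n) A) i F) = 0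


/-! The degree-`d` component is `T`-linear up to a shift along homogeneous elements:
`(H g)_d = H_{d - deg g} g`. Hence it preserves ideals generated by homogeneous elements.
Conversely `T` is Noetherian, so `J` is generated by finitely many homogeneous `g_k`. Writing
`F_d = ∑ₖ a_{d,k} g_k`, the series `H_k = ∑_d (a_{d,k})_{d - deg g_k}` exist because their
summands have disjoint supports, and `F = ∑ₖ H_k g_k` since both sides have the same components. -/

local notation "T" => PowerSeries (MvPowerSeries (Fin n) A)

local notation "coeff₂" i:max e:max F:max =>
  MvPowerSeries.coeff (R := A) e (PowerSeries.coeff (R := MvPowerSeries (Fin n) A) i F)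

open Finset

theorem ext_coeff₂ {F G : T} (h : ∀ i e, coeff₂ i e F = coeff₂ i e G) : F = G :=
  PowerSeries.ext fun i => MvPowerSeries.ext fun e => h i e

def ofCoeff₂ (f : ℕ → (Fin n →₀ ℕ) → A) : T :=
  PowerSeries.mk fun i => (f i : MvPowerSeries (Fin n) A)

theorem coeff₂_ofCoeff₂ (f : ℕ → (Fin n →₀ ℕ) → A) (i : ℕ) (e : Fin n →₀ ℕ) :
    coeff₂ i e (ofCoeff₂ f) = f i e :=
  congrArg (MvPowerSeries.coeff e) (PowerSeries.coeff_mk i _)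

theorem coeff₂_mul (F G : T) (i : ℕ) (e : Fin n →₀ ℕ) :
    coeff₂ i e (F * G) = ∑ p ∈ antidiagonal i, ∑ q ∈ antidiagonal e,
      coeff₂ p.1 q.1 F * coeff₂ p.2 q.2 G := by
  simp only [PowerSeries.coeff_mul, map_sum, MvPowerSeries.coeff_mul]

def tComponent (d : ℤ) : T →+ T where
  toFun F := ofCoeff₂ fun i e => if (e.degree : ℤ) = i + d then coeff₂ i e F else 0
  map_zero' := ext_coeff₂ fun i e => by simp [coeff₂_ofCoeff₂]
  map_add' F G := ext_coeff₂ fun i e => by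
    simp only [coeff₂_ofCoeff₂, map_add]
    split_ifs <;> simp

theorem coeff₂_tComponent (d : ℤ) (F : T) (i : ℕ) (e : Fin n →₀ ℕ) :
    coeff₂ i e (tComponent d F) = if (e.degree : ℤ) = i + d then coeff₂ i e F else 0 :=
  coeff₂_ofCoeff₂ (fun i e => if (e.degree : ℤ) = i + d then coeff₂ i e F else 0) i e

theorem tComponent_eq_self {d : ℤ} {F : T} (hF : tHomogeneous d F) : tComponent d F = F :=
  ext_coeff₂ fun i e => by
    rw [coeff₂_tComponent]
    split_ifs with h
    · rfl
    · exact (hF i e h).symm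

theorem tComponent_tComponent (d : ℤ) (F : T) : tComponent d (tComponent d F) = tComponent d F :=
  ext_coeff₂ fun i e => by
    simp only [coeff₂_tComponent]
    split_ifs <;> rfl

theorem ext_tComponent {F G : T} (h : ∀ d, tComponent d F = tComponent d G) : F = G :=
  ext_coeff₂ fun i e => by
    simpa [coeff₂_tComponent] using congrArg (coeff₂ i e ·) (h (e.degree - i))

/-- The formal sum `∑_d (c d)_d` of degree-`d` components. -/
def tGlue (c : ℤ → T) : T :=
  ofCoeff₂ fun i e => coeff₂ i e (c (e.degree - i))

theorem coeff₂_tGlue (c : ℤ → T) (i : ℕ) (e : Fin n →₀ ℕ) :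
    coeff₂ i e (tGlue c) = coeff₂ i e (c (e.degree - i)) :=
  coeff₂_ofCoeff₂ _ i e

theorem tComponent_tGlue (c : ℤ → T) (d : ℤ) : tComponent d (tGlue c) = tComponent d (c d) :=
  ext_coeff₂ fun i e => by
    simp only [coeff₂_tComponent, coeff₂_tGlue]
    split_ifs with h
    · rw [show (e.degree : ℤ) - i = d by omega]
    · rfl

theorem tComponent_mul_of_tHomogeneous {d' : ℤ} {g : T} (hg : tHomogeneous d' g) (d : ℤ)
    (H : T) : tComponent d (H * g) = tComponent (d - d') H * g :=
  ext_coeff₂ fun i e => by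
    have key : ∀ p ∈ antidiagonal i, ∀ q ∈ antidiagonal e, coeff₂ p.2 q.2 g ≠ 0 →
        ((e.degree : ℤ) = i + d ↔ (q.1.degree : ℤ) = p.1 + (d - d')) := by
      intro p hp q hq hpq
      have hq2 : (q.2.degree : ℤ) = p.2 + d' := by_contra fun h => hpq (hg p.2 q.2 h)
      rw [HasAntidiagonal.mem_antidiagonal] at hp hq
      rw [← hp, ← hq, map_add]
      push_cast
      omega
    simp only [coeff₂_tComponent, coeff₂_mul]
    by_cases h : (e.degree : ℤ) = i + d
    · rw [if_pos h]
      refine sum_congr rfl fun p hp => sum_congr rfl fun q hq => ?_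
      rcases eq_or_ne (coeff₂ p.2 q.2 g) 0 with h0 | h0
      · simp [h0]
      · rw [if_pos ((key p hp q hq h0).mp h)]
    · rw [if_neg h]
      refine (sum_eq_zero fun p hp => sum_eq_zero fun q hq => ?_).symm
      rcases eq_or_ne (coeff₂ p.2 q.2 g) 0 with h0 | h0
      · simp [h0]
      · rw [if_neg (mt (key p hp q hq h0).mpr h), zero_mul]

theorem tComponent_mem_span {s : Set T} (hs : ∀ g ∈ s, ∃ d, tHomogeneous d g) {F : T}
    (hF : F ∈ Ideal.span s) (d : ℤ) : tComponent d F ∈ Ideal.span s := by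
  suffices ∀ H, tComponent d (H * F) ∈ Ideal.span s by simpa using this 1
  induction hF using Submodule.span_induction with
  | mem g hg =>
    obtain ⟨d', hd'⟩ := hs g hg
    intro H
    rw [tComponent_mul_of_tHomogeneous hd']
    exact Ideal.mul_mem_left _ _ (Ideal.subset_span hg)
  | zero => simp
  | add x y _ _ hx hy => intro H; rw [mul_add, map_add]; exact add_mem (hx H) (hy H)
  | smul a x _ hx => intro H; rw [smul_eq_mul, ← mul_assoc]; exact hx (H * a)

theorem mem_span_finset_of_tComponent_mem {s : Finset T} (hs : ∀ g ∈ s, ∃ d, tHomogeneous d g)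
    {F : T} (hF : ∀ d, tComponent d F ∈ Ideal.span s) : F ∈ Ideal.span s := by
  choose! δ hδ using hs
  choose a ha using fun d => Submodule.mem_span_finset.mp (hF d)
  have hglue : F = ∑ g ∈ s, tGlue (fun d => a (d + δ g) g) * g := by
    refine ext_tComponent fun d => ?_
    rw [← tComponent_tComponent, ← (ha d).2, map_sum, map_sum]
    refine sum_congr rfl fun g hg => ?_
    rw [smul_eq_mul, tComponent_mul_of_tHomogeneous (hδ g hg),
      tComponent_mul_of_tHomogeneous (hδ g hg), tComponent_tGlue, sub_add_cancel]
  rw [hglue]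
  exact Ideal.sum_mem _ fun g hg => Ideal.mul_mem_left _ _ (Ideal.subset_span hg)

theorem mem_span_of_tComponent_mem [IsNoetherianRing A] {s : Set T}
    (hs : ∀ g ∈ s, ∃ d, tHomogeneous d g) {F : T} (hF : ∀ d, tComponent d F ∈ Ideal.span s) :
    F ∈ Ideal.span s := by
  obtain ⟨t, hts, hspan⟩ :=
    (Submodule.fg_span_iff_fg_span_finset_subset s).mp (IsNoetherian.noetherian (Ideal.span s))
  rw [Ideal.span, hspan] at hF ⊢
  exact mem_span_finset_of_tComponent_mem (fun g hg => hs g (hts hg)) hF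

/-- Let `J ⊆ T = A[[x₁,…,xₙ]][[t]]` be an ideal generated by
`t`-homogeneous elements, `A` a complete regular local ring. If `F ∈ T` has
`t`-homogeneous decomposition `F = ∑_{d ∈ ℤ} c d`, then `F ∈ J` iff `c d ∈ J` for
all `d ∈ ℤ`. -/
theorem stmt4 [IsLocalRing A] (hA : IsCompleteRegularLocal A)
    (J : Ideal (PowerSeries (MvPowerSeries (Fin n) A)))
    (hJ : ∃ gens : Set (PowerSeries (MvPowerSeries (Fin n) A)),
      (∀ g ∈ gens, ∃ d : ℤ, tHomogeneous d g) ∧ J = Ideal.span gens)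
    (F : PowerSeries (MvPowerSeries (Fin n) A))
    (c : ℤ → PowerSeries (MvPowerSeries (Fin n) A))
    (hc : ∀ d : ℤ, tHomogeneous d (c d))
    (hdecomp : ∀ (i : ℕ) (e : Fin n →₀ ℕ),
      MvPowerSeries.coeff (R := A) e (PowerSeries.coeff (R := MvPowerSeries (Fin n) A) i F) =
        MvPowerSeries.coeff (R := A) e (PowerSeries.coeff (R := MvPowerSeries (Fin n) A) i
          (c (((e.sum fun _ v => v : ℕ) : ℤ) - (i : ℤ))))) :
    F ∈ J ↔ ∀ d : ℤ, c d ∈ J := by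
  obtain ⟨gens, hgens, rfl⟩ := hJ
  have hF : F = tGlue c := ext_coeff₂ fun i e => (hdecomp i e).trans (coeff₂_tGlue c i e).symm
  have hcomp (d : ℤ) : tComponent d F = c d := by
    rw [hF, tComponent_tGlue, tComponent_eq_self (hc d)]
  have : IsNoetherianRing A := hA.1
  simp only [← hcomp]
  exact ⟨tComponent_mem_span hgens, mem_span_of_tComponent_mem hgens⟩
end
end

section
/- With S = A[[x₁,…,xₙ]] and T = S[[t]] as above, for any two ideals I, J ⊆ S one has hom(I ∩ J) = hom(I) ∩ hom(J). -/
noncomputable section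

/-- `A` either contains a field, or is unramified (of mixed characteristic), i.e. the
residue characteristic `p` satisfies `p ∈ m_A \ m_A²`. -/
def ContainsFieldOrUnramified (A : Type*) [CommRing A] [IsLocalRing A] : Prop :=
  (∃ K : Subring A, IsField K) ∨
    (∃ p : ℕ, p.Prime ∧ (p : A) ∈ IsLocalRing.maximalIdeal A ∧
      (p : A) ∉ IsLocalRing.maximalIdeal A ^ 2)

variable {A : Type*} [CommRing A] {n : ℕ}

/-- The ideal `(x₁, …, xₙ)` of `S = A[[x₁,…,xₙ]]`. -/
def xIdeal (A : Type*) [CommRing A] (n : ℕ) : Ideal (MvPowerSeries (Fin n) A) :=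
  Ideal.span (Set.range MvPowerSeries.X)

/-- The order `o(f) = sup { i : f ∈ (x₁,…,xₙ)^i }` of a power series `f ∈ S`. -/
def ordF (f : MvPowerSeries (Fin n) A) : ℕ :=
  sSup {i : ℕ | f ∈ (xIdeal A n) ^ i}

/-- The degree-`i` homogeneous component of `f` (in the `x`-variables; elements of `A`
have degree `0`). -/
def homComp (i : ℕ) (f : MvPowerSeries (Fin n) A) : MvPowerSeries (Fin n) A :=
  fun e => if (e.sum fun _ v => v) = i then MvPowerSeries.coeff e f else 0

/-- The homogenization `hom(f) = t^{-o(f)} ψ(f) ∈ T = S[[t]]`, where `ψ : S → T` is the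
`A`-algebra map `xᵢ ↦ xᵢ t`; the coefficient of `t^j` is the homogeneous component of
`f` of degree `o(f) + j`. -/
def homF (f : MvPowerSeries (Fin n) A) : PowerSeries (MvPowerSeries (Fin n) A) :=
  PowerSeries.mk fun j => homComp (ordF f + j) f

/-- `hom(I) = ( hom(f) : 0 ≠ f ∈ I ) ⊆ T = S[[t]]`. -/
def homIdeal (I : Ideal (MvPowerSeries (Fin n) A)) :
    Ideal (PowerSeries (MvPowerSeries (Fin n) A)) :=
  Ideal.span {F | ∃ f ∈ I, f ≠ 0 ∧ homF f = F}

/-!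
Give `T = S⟦t⟧` the `ℤ`-grading in which `t ^ m * x ^ μ` has weight `|μ| - m`. Every `hom(f)` is
homogeneous of weight `o(f)`, and setting `t = 1` in the weight-`e` component of `a * hom(f)`
gives a multiple of `f`; so the dehomogenized components of any element of `hom(I)` lie in `I`.
Conversely a homogeneous element whose dehomogenization `g` lies in `I` is `t ^ k * hom(g)`, hence
lies in `hom(I)`. Thus every homogeneous component of an element `G` of `hom(I) ∩ hom(J)` lies in
`hom(I ∩ J)`. Finally `G` minus its components of weight in `[-E, E]` lies in `(x, t) ^ (E + 1)`,
and `(x, t)` lies in the Jacobson radical of the Noetherian ring `T`, so Krull's intersection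
theorem for `T ⧸ hom(I ∩ J)` puts `G` in `hom(I ∩ J)`.
-/

theorem Ideal.mem_of_forall_mem_sup_pow {R : Type*} [CommRing R] [IsNoetherianRing R]
    {Q K : Ideal R} (hK : K ≤ Ideal.jacobson ⊥) {x : R} (hx : ∀ i : ℕ, x ∈ Q ⊔ K ^ i) :
    x ∈ Q := by
  have hbot := K.iInf_pow_smul_eq_bot_of_le_jacobson (M := R ⧸ Q) hK
  suffices Ideal.Quotient.mk Q x ∈ (⨅ i : ℕ, K ^ i • ⊤ : Submodule R (R ⧸ Q)) by
    rwa [hbot, Submodule.mem_bot, Ideal.Quotient.eq_zero_iff_mem] at this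
  refine Submodule.mem_iInf _ |>.mpr fun i => ?_
  obtain ⟨q, hq, k, hk, rfl⟩ := Submodule.mem_sup.mp (hx i)
  rw [map_add, Ideal.Quotient.eq_zero_iff_mem.mpr hq, zero_add, ← mul_one k, map_mul]
  exact Submodule.smul_mem_smul hk (Submodule.mem_top (R := R) (x := Ideal.Quotient.mk Q 1))

theorem PowerSeries.mem_map_C_of_forall_coeff_mem {R : Type*} [CommRing R] {Q : Ideal R}
    (hQ : Q.FG) {P : PowerSeries R} (hP : ∀ m, PowerSeries.coeff m P ∈ Q) :
    P ∈ Q.map PowerSeries.C := by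
  classical
  obtain ⟨s, rfl⟩ := hQ
  choose ρ _ hρ using fun m => Submodule.mem_span_finset.mp (hP m)
  have hP : P = ∑ a ∈ s, PowerSeries.mk (fun m => ρ m a) * PowerSeries.C a := by
    ext m
    simp only [map_sum, PowerSeries.coeff_mul_C, PowerSeries.coeff_mk, ← hρ m, smul_eq_mul]
  rw [hP]
  exact Ideal.sum_mem _ fun a ha =>
    Ideal.mul_mem_left _ _ (Ideal.mem_map_of_mem _ (Ideal.subset_span ha))

theorem PowerSeries.mem_jacobson_bot_of_constantCoeff {σ R : Type*} [CommRing R]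
    {G : PowerSeries (MvPowerSeries σ R)}
    (hG : MvPowerSeries.constantCoeff (PowerSeries.constantCoeff G) = 0) :
    G ∈ Ideal.jacobson ⊥ := by
  refine Ideal.mem_jacobson_bot.mpr fun H => ?_
  rw [PowerSeries.isUnit_iff_constantCoeff, MvPowerSeries.isUnit_iff_constantCoeff]
  simp [hG]

namespace MvPowerSeries

open Finsupp

variable {σ R : Type*} [CommRing R]

theorem le_order_of_mem_span_X_pow {k : ℕ} {f : MvPowerSeries σ R}
    (hf : f ∈ Ideal.span (Set.range X) ^ k) : (k : ℕ∞) ≤ f.order := by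
  induction k generalizing f with
  | zero => simp
  | succ k ih =>
    rw [pow_succ'] at hf
    refine Submodule.mul_induction_on hf (fun a ha b hb => ?_) fun a b ha hb => ?_
    · have ha : 1 ≤ a.order := by
        refine (one_le_order_iff_constCoeff_eq_zero).mpr ?_
        refine Submodule.span_induction ?_ (map_zero _) (fun _ _ _ _ h h' => ?_)
          (fun c _ _ h => ?_) ha
        · rintro _ ⟨i, rfl⟩; exact constantCoeff_X i
        · rw [map_add, h, h', add_zero]
        · rw [smul_eq_mul, map_mul, h, mul_zero]
      calc ((k + 1 : ℕ) : ℕ∞) = 1 + k := by push_cast; ring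
        _ ≤ a.order + b.order := add_le_add ha (ih hb)
        _ ≤ (a * b).order := le_order_mul
    · exact le_trans (le_min ha hb) min_order_le_add

variable [LinearOrder σ]

/-- Sends `f` to the series `g` with `X i * g` the part of `f` on monomials whose smallest
variable is `i`. -/
def divXOfMinVar (i : σ) (f : MvPowerSeries σ R) : MvPowerSeries σ R :=
  fun ν =>
    if (ν + single i 1).support.min = (i : WithTop σ) then coeff (ν + single i 1) f else 0

theorem coeff_divXOfMinVar (i : σ) (f : MvPowerSeries σ R) (ν : σ →₀ ℕ) :
    coeff ν (divXOfMinVar i f) =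
      if (ν + single i 1).support.min = (i : WithTop σ) then coeff (ν + single i 1) f else 0 :=
  rfl

theorem coeff_X_mul_divXOfMinVar (i : σ) (f : MvPowerSeries σ R) (μ : σ →₀ ℕ) :
    coeff μ (X i * divXOfMinVar i f) =
      if μ.support.min = (i : WithTop σ) then coeff μ f else 0 := by
  classical
  rw [X, coeff_monomial_mul, one_mul, coeff_divXOfMinVar]
  by_cases hi : single i 1 ≤ μ
  · rw [if_pos hi, tsub_add_cancel_of_le hi]
  · refine (if_neg hi).trans (if_neg fun hmin => hi ?_).symm
    exact single_le_iff.mpr (Nat.one_le_iff_ne_zero.mpr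
      (mem_support_iff.mp (Finset.mem_of_min hmin)))

theorem sum_X_mul_divXOfMinVar [Fintype σ] {f : MvPowerSeries σ R}
    (hf : constantCoeff f = 0) : ∑ i, X i * divXOfMinVar i f = f := by
  ext μ
  simp only [map_sum, coeff_X_mul_divXOfMinVar]
  rcases eq_or_ne μ 0 with rfl | hμ
  · simp [hf]
  · obtain ⟨i, hi⟩ := Finset.min_of_nonempty (support_nonempty_iff.mpr hμ)
    simp [hi]

theorem le_order_divXOfMinVar {k : ℕ} {f : MvPowerSeries σ R} (hf : (k + 1 : ℕ) ≤ f.order)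
    (i : σ) : (k : ℕ∞) ≤ (divXOfMinVar i f).order := by
  refine nat_le_order fun ν hν => ?_
  rw [coeff_divXOfMinVar, coeff_of_lt_order (lt_of_lt_of_le (by simpa using hν) hf), ite_self]

theorem mem_span_X_pow_of_le_order [Fintype σ] {k : ℕ} {f : MvPowerSeries σ R}
    (hf : (k : ℕ∞) ≤ f.order) : f ∈ Ideal.span (Set.range X) ^ k := by
  induction k generalizing f with
  | zero => simp
  | succ k ih =>
    have hf0 : constantCoeff f = 0 :=
      one_le_order_iff_constCoeff_eq_zero.mp (le_trans (by simp) hf)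
    rw [← sum_X_mul_divXOfMinVar hf0, pow_succ']
    exact Ideal.sum_mem _ fun i _ =>
      Ideal.mul_mem_mul (Ideal.subset_span ⟨i, rfl⟩) (ih (le_order_divXOfMinVar hf i))

theorem mem_span_X_pow_iff [Fintype σ] {k : ℕ} {f : MvPowerSeries σ R} :
    f ∈ Ideal.span (Set.range X) ^ k ↔ (k : ℕ∞) ≤ f.order :=
  ⟨le_order_of_mem_span_X_pow, mem_span_X_pow_of_le_order⟩

end MvPowerSeries

theorem ordF_eq_toNat_order (f : MvPowerSeries (Fin n) A) : ordF f = f.order.toNat := by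
  simp only [ordF, xIdeal, MvPowerSeries.mem_span_X_pow_iff]
  induction f.order using ENat.recTopCoe with
  | top => simp
  | coe N => simp only [Nat.cast_le, ENat.toNat_natCast]; exact csSup_Iic

theorem coe_ordF {f : MvPowerSeries (Fin n) A} (hf : f ≠ 0) : (ordF f : ℕ∞) = f.order := by
  rw [ordF_eq_toNat_order, ENat.natCast_toNat (MvPowerSeries.order_eq_top_iff.not.mpr hf)]

open Finset.HasAntidiagonal in
theorem Finsupp.degree_add_of_mem_antidiagonal {σ : Type*} [DecidableEq σ] {μ : σ →₀ ℕ}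
    {q : (σ →₀ ℕ) × (σ →₀ ℕ)} (hq : q ∈ antidiagonal μ) :
    degree q.1 + degree q.2 = degree μ := by
  rw [← map_add, mem_antidiagonal.mp hq]

namespace Homogenization

open Finsupp Finset.HasAntidiagonal

variable {σ R : Type*} [CommRing R]

def bicoeff (m : ℕ) (μ : σ →₀ ℕ) : PowerSeries (MvPowerSeries σ R) →+ R :=
  (MvPowerSeries.coeff μ).toAddMonoidHom.comp (PowerSeries.coeff m).toAddMonoidHom

theorem bicoeff_apply (m : ℕ) (μ : σ →₀ ℕ) (G : PowerSeries (MvPowerSeries σ R)) :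
    bicoeff m μ G = MvPowerSeries.coeff μ (PowerSeries.coeff m G) :=
  rfl

theorem ext_bicoeff {G H : PowerSeries (MvPowerSeries σ R)}
    (h : ∀ m μ, bicoeff m μ G = bicoeff m μ H) : G = H :=
  PowerSeries.ext fun m => MvPowerSeries.ext fun μ => h m μ

theorem bicoeff_mul [DecidableEq σ] (m : ℕ) (μ : σ →₀ ℕ)
    (G H : PowerSeries (MvPowerSeries σ R)) :
    bicoeff m μ (G * H) = ∑ p ∈ antidiagonal m, ∑ q ∈ antidiagonal μ,
      bicoeff p.1 q.1 G * bicoeff p.2 q.2 H := by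
  simp only [bicoeff_apply, PowerSeries.coeff_mul, map_sum, MvPowerSeries.coeff_mul]

def ofBicoeff (c : ℕ → (σ →₀ ℕ) → R) : PowerSeries (MvPowerSeries σ R) :=
  PowerSeries.mk (R := MvPowerSeries σ R) c

@[simp]
theorem bicoeff_ofBicoeff (c : ℕ → (σ →₀ ℕ) → R) (m : ℕ) (μ : σ →₀ ℕ) :
    bicoeff m μ (ofBicoeff c) = c m μ :=
  congrArg (MvPowerSeries.coeff μ) (PowerSeries.coeff_mk (R := MvPowerSeries σ R) m c)

open Classical in
def restrict (s : Set (ℕ × (σ →₀ ℕ))) :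
    PowerSeries (MvPowerSeries σ R) →+ PowerSeries (MvPowerSeries σ R) where
  toFun G := ofBicoeff fun m μ => if (m, μ) ∈ s then bicoeff m μ G else 0
  map_zero' := ext_bicoeff fun m μ => by simp
  map_add' G H := ext_bicoeff fun m μ => by simp [ite_add_zero]

open Classical in
@[simp]
theorem bicoeff_restrict (s : Set (ℕ × (σ →₀ ℕ))) (m : ℕ) (μ : σ →₀ ℕ)
    (G : PowerSeries (MvPowerSeries σ R)) :
    bicoeff m μ (restrict s G) = if (m, μ) ∈ s then bicoeff m μ G else 0 :=
  bicoeff_ofBicoeff (fun m μ => if (m, μ) ∈ s then bicoeff m μ G else 0) m μ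

/-- `t ^ m * x ^ μ` has weight `|μ| - m`. -/
def component (e : ℤ) : PowerSeries (MvPowerSeries σ R) →+ PowerSeries (MvPowerSeries σ R) :=
  restrict {p | ((degree p.2 : ℕ) : ℤ) - p.1 = e}

theorem bicoeff_component (e : ℤ) (m : ℕ) (μ : σ →₀ ℕ)
    (G : PowerSeries (MvPowerSeries σ R)) :
    bicoeff m μ (component e G) =
      if ((degree μ : ℕ) : ℤ) - m = e then bicoeff m μ G else 0 := by
  simp [component]

def IsHomogeneous (e : ℤ) (G : PowerSeries (MvPowerSeries σ R)) : Prop :=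
  ∀ m μ, bicoeff m μ G ≠ 0 → ((degree μ : ℕ) : ℤ) - m = e

theorem isHomogeneous_component (e : ℤ) (G : PowerSeries (MvPowerSeries σ R)) :
    IsHomogeneous e (component e G) := fun m μ h => by
  rw [bicoeff_component] at h
  exact of_not_not fun he => h (if_neg he)

/-- Setting `t = 1` in a series of weight `e`. -/
def dehomogenize (e : ℤ) : PowerSeries (MvPowerSeries σ R) →+ MvPowerSeries σ R where
  toFun G μ := if e ≤ (degree μ : ℕ) then bicoeff ((degree μ : ℕ) - e).toNat μ G else 0
  map_zero' := by ext μ; exact (ite_self _).trans (map_zero _).symm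
  map_add' G H := by
    ext μ
    have h := congrArg (fun r => if e ≤ ((degree μ : ℕ) : ℤ) then r else 0)
      (map_add (bicoeff (((degree μ : ℕ) : ℤ) - e).toNat μ) G H)
    rw [ite_add_zero] at h
    exact h

theorem coeff_dehomogenize (e : ℤ) (μ : σ →₀ ℕ) (G : PowerSeries (MvPowerSeries σ R)) :
    MvPowerSeries.coeff μ (dehomogenize e G) =
      if e ≤ (degree μ : ℕ) then bicoeff ((degree μ : ℕ) - e).toNat μ G else 0 :=
  rfl

theorem coeff_dehomogenize_of_lt {e : ℤ} {μ : σ →₀ ℕ} (h : ((degree μ : ℕ) : ℤ) < e)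
    (G : PowerSeries (MvPowerSeries σ R)) : MvPowerSeries.coeff μ (dehomogenize e G) = 0 :=
  if_neg (not_le.mpr h)

theorem IsHomogeneous.bicoeff_eq {e : ℤ} {G : PowerSeries (MvPowerSeries σ R)}
    (hG : IsHomogeneous e G) (m : ℕ) (μ : σ →₀ ℕ) :
    bicoeff m μ G = if ((degree μ : ℕ) : ℤ) - m = e then
      MvPowerSeries.coeff μ (dehomogenize e G) else 0 := by
  split_ifs with h
  · rw [coeff_dehomogenize, if_pos (by omega), show ((degree μ : ℕ) - e).toNat = m by omega]
  · exact of_not_not fun h0 => h (hG m μ h0)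

theorem component_mul_of_isHomogeneous {d : ℤ} {H : PowerSeries (MvPowerSeries σ R)}
    (hH : IsHomogeneous d H) (e : ℤ) (a : PowerSeries (MvPowerSeries σ R)) :
    component e (a * H) = component (e - d) a * H := by
  classical
  refine ext_bicoeff fun m μ => ?_
  simp only [bicoeff_component, bicoeff_mul, Finset.ite_sum_zero]
  refine Finset.sum_congr rfl fun p hp => Finset.sum_congr rfl fun q hq => ?_
  by_cases hH0 : bicoeff p.2 q.2 H = 0
  · simp [hH0]
  have hpq := hH _ _ hH0
  have hq := degree_add_of_mem_antidiagonal hq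
  have hp := mem_antidiagonal.mp hp
  rw [ite_mul, zero_mul]
  exact if_congr (by omega) rfl rfl

theorem coeff_dehomogenize_mul_coeff_dehomogenize_eq_zero {c d : ℤ} {μ ν : σ →₀ ℕ}
    (h : ¬(c ≤ ((degree μ : ℕ) : ℤ) ∧ d ≤ ((degree ν : ℕ) : ℤ)))
    (u v : PowerSeries (MvPowerSeries σ R)) :
    MvPowerSeries.coeff μ (dehomogenize c u) * MvPowerSeries.coeff ν (dehomogenize d v) = 0 := by
  rcases not_and_or.mp h with h | h
  · rw [coeff_dehomogenize_of_lt (not_le.mp h), zero_mul]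
  · rw [coeff_dehomogenize_of_lt (not_le.mp h), mul_zero]

theorem dehomogenize_mul {c d : ℤ} {u v : PowerSeries (MvPowerSeries σ R)}
    (hu : IsHomogeneous c u) (hv : IsHomogeneous d v) :
    dehomogenize (c + d) (u * v) = dehomogenize c u * dehomogenize d v := by
  classical
  ext μ
  rw [MvPowerSeries.coeff_mul]
  by_cases hμ : c + d ≤ ((degree μ : ℕ) : ℤ)
  swap
  · rw [coeff_dehomogenize_of_lt (not_le.mp hμ)]
    refine (Finset.sum_eq_zero fun q hq => ?_).symm
    have hq := degree_add_of_mem_antidiagonal hq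
    exact coeff_dehomogenize_mul_coeff_dehomogenize_eq_zero (by omega) u v
  rw [coeff_dehomogenize, if_pos hμ, bicoeff_mul, Finset.sum_comm]
  refine Finset.sum_congr rfl fun q hq => ?_
  have hq := degree_add_of_mem_antidiagonal hq
  simp only [hu.bicoeff_eq, hv.bicoeff_eq, ite_mul, mul_ite, zero_mul, mul_zero]
  by_cases h : c ≤ ((degree q.1 : ℕ) : ℤ) ∧ d ≤ ((degree q.2 : ℕ) : ℤ)
  · have hp : ((((degree q.1 : ℕ) : ℤ) - c).toNat, (((degree q.2 : ℕ) : ℤ) - d).toNat) ∈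
        antidiagonal (((degree μ : ℕ) : ℤ) - (c + d)).toNat := by
      rw [mem_antidiagonal]; omega
    refine (Finset.sum_eq_single_of_mem _ hp fun p hp' hne => ?_).trans
      (by rw [if_pos (by omega), if_pos (by omega)])
    rw [mem_antidiagonal] at hp'
    split_ifs
    · exact absurd (Prod.ext (by omega) (by omega)) hne
    all_goals rfl
  · rw [coeff_dehomogenize_mul_coeff_dehomogenize_eq_zero h]
    refine Finset.sum_eq_zero fun p _ => ?_
    split_ifs <;> rfl

theorem bicoeff_X_pow_mul (k m : ℕ) (μ : σ →₀ ℕ) (G : PowerSeries (MvPowerSeries σ R)) :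
    bicoeff m μ (PowerSeries.X ^ k * G) = if k ≤ m then bicoeff (m - k) μ G else 0 := by
  rw [bicoeff_apply, PowerSeries.coeff_X_pow_mul', apply_ite (MvPowerSeries.coeff μ), map_zero]
  rfl

def xtIdeal (σ R : Type*) [CommRing R] : Ideal (PowerSeries (MvPowerSeries σ R)) :=
  (Ideal.span (Set.range MvPowerSeries.X)).map PowerSeries.C ⊔ Ideal.span {PowerSeries.X}

theorem xtIdeal_le_jacobson : xtIdeal σ R ≤ Ideal.jacobson ⊥ := by
  refine sup_le (Ideal.map_le_iff_le_comap.mpr (Ideal.span_le.mpr ?_)) (Ideal.span_le.mpr ?_)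
  · rintro _ ⟨i, rfl⟩
    exact PowerSeries.mem_jacobson_bot_of_constantCoeff (by simp)
  · rintro _ rfl
    exact PowerSeries.mem_jacobson_bot_of_constantCoeff (by simp)

theorem sub_sum_component_mem_xtIdeal_pow [Fintype σ] [LinearOrder σ] [IsNoetherianRing R]
    (G : PowerSeries (MvPowerSeries σ R)) (E : ℕ) :
    G - ∑ e ∈ Finset.Icc (-E : ℤ) E, component e G ∈ xtIdeal σ R ^ (E + 1) := by
  classical
  have hsplit : G - ∑ e ∈ Finset.Icc (-E : ℤ) E, component e G =
      restrict {p | p.1 + E < degree p.2} G + restrict {p | degree p.2 + E < p.1} G := by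
    refine ext_bicoeff fun m μ => ?_
    simp only [map_sub, map_add, map_sum, bicoeff_component, bicoeff_restrict,
      Set.mem_ofPred_eq, Finset.sum_ite_eq, Finset.mem_Icc]
    split_ifs <;> first | omega | simp
  rw [hsplit]
  refine Ideal.add_mem _ (Ideal.pow_right_mono le_sup_left _ ?_)
    (Ideal.pow_right_mono le_sup_right _ ?_)
  · rw [← Ideal.map_pow]
    refine PowerSeries.mem_map_C_of_forall_coeff_mem (IsNoetherian.noetherian _) fun m => ?_
    refine MvPowerSeries.mem_span_X_pow_of_le_order (MvPowerSeries.nat_le_order fun μ hμ => ?_)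
    rw [← bicoeff_apply, bicoeff_restrict, if_neg (by simp only [Set.mem_ofPred_eq]; omega)]
  · rw [Ideal.span_singleton_pow, Ideal.mem_span_singleton, PowerSeries.X_pow_dvd_iff]
    refine fun m hm => MvPowerSeries.ext fun μ => ?_
    rw [← bicoeff_apply, bicoeff_restrict, if_neg (by simp only [Set.mem_ofPred_eq]; omega),
      map_zero]

theorem mem_of_forall_component_mem [Fintype σ] [LinearOrder σ] [IsNoetherianRing R]
    {Q : Ideal (PowerSeries (MvPowerSeries σ R))} {G : PowerSeries (MvPowerSeries σ R)}
    (hG : ∀ e, component e G ∈ Q) : G ∈ Q := by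
  refine Ideal.mem_of_forall_mem_sup_pow xtIdeal_le_jacobson fun E => Submodule.mem_sup.mpr
    ⟨∑ e ∈ Finset.Icc (-E : ℤ) E, component e G, Q.sum_mem fun e _ => hG e, _, ?_,
      add_sub_cancel _ G⟩
  exact Ideal.pow_le_pow_right E.le_succ (sub_sum_component_mem_xtIdeal_pow G E)

theorem bicoeff_homF (f : MvPowerSeries (Fin n) A) (m : ℕ) (μ : Fin n →₀ ℕ) :
    bicoeff m μ (homF f) = if degree μ = ordF f + m then MvPowerSeries.coeff μ f else 0 := by
  rw [bicoeff_apply, homF, PowerSeries.coeff_mk]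
  rfl

theorem isHomogeneous_homF (f : MvPowerSeries (Fin n) A) : IsHomogeneous (ordF f) (homF f) :=
  fun m μ h => by
    rw [bicoeff_homF] at h
    split_ifs at h with h'
    · omega
    · exact absurd rfl h

theorem dehomogenize_homF {f : MvPowerSeries (Fin n) A} (hf : f ≠ 0) :
    dehomogenize (ordF f) (homF f) = f := by
  ext μ
  rw [coeff_dehomogenize]
  split_ifs with h
  · rw [bicoeff_homF, if_pos (by omega)]
  · refine (MvPowerSeries.coeff_of_lt_order ?_).symm
    rw [← coe_ordF hf, Nat.cast_lt]
    omega

theorem dehomogenize_component_mem {I : Ideal (MvPowerSeries (Fin n) A)}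
    {G : PowerSeries (MvPowerSeries (Fin n) A)} (hG : G ∈ homIdeal I) (e : ℤ) :
    dehomogenize e (component e G) ∈ I := by
  obtain ⟨c, hc, rfl⟩ := Submodule.mem_span_set.mp hG
  rw [Finsupp.sum, map_sum, map_sum]
  refine Ideal.sum_mem _ fun F hF => ?_
  obtain ⟨f, hfI, hf0, rfl⟩ := hc hF
  have hmul := dehomogenize_mul (isHomogeneous_component (e - ordF f) (c (homF f)))
    (isHomogeneous_homF f)
  rw [sub_add_cancel, dehomogenize_homF hf0] at hmul
  rw [smul_eq_mul, component_mul_of_isHomogeneous (isHomogeneous_homF f), hmul]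
  exact I.mul_mem_left _ hfI

theorem IsHomogeneous.eq_X_pow_mul_homF {e : ℤ} {G : PowerSeries (MvPowerSeries (Fin n) A)}
    (hG : IsHomogeneous e G) (hf : dehomogenize e G ≠ 0) :
    G = PowerSeries.X ^ (ordF (dehomogenize e G) - e).toNat * homF (dehomogenize e G) := by
  set f := dehomogenize e G
  have he : e ≤ ordF f := by
    suffices (e.toNat : ℕ∞) ≤ f.order by
      rw [← coe_ordF hf, Nat.cast_le] at this; omega
    exact MvPowerSeries.nat_le_order fun μ hμ => coeff_dehomogenize_of_lt (by omega) G
  refine ext_bicoeff fun m μ => ?_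
  rw [hG.bicoeff_eq, bicoeff_X_pow_mul, bicoeff_homF]
  by_cases hμ : ((degree μ : ℕ) : ℤ) - m = e
  · by_cases hm : (ordF f - e).toNat ≤ m
    · rw [if_pos hμ, if_pos hm, if_pos (by omega)]
    · rw [if_pos hμ, if_neg hm]
      exact MvPowerSeries.coeff_of_lt_order (by rw [← coe_ordF hf, Nat.cast_lt]; omega)
  · rw [if_neg hμ]
    split_ifs <;> first | rfl | omega

theorem mem_homIdeal_of_isHomogeneous {I : Ideal (MvPowerSeries (Fin n) A)} {e : ℤ}
    {G : PowerSeries (MvPowerSeries (Fin n) A)} (hG : IsHomogeneous e G)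
    (hI : dehomogenize e G ∈ I) : G ∈ homIdeal I := by
  by_cases hf : dehomogenize e G = 0
  · have : G = 0 := ext_bicoeff fun m μ => by simp [hG.bicoeff_eq, hf]
    rw [this]
    exact zero_mem _
  · rw [hG.eq_X_pow_mul_homF hf]
    exact Ideal.mul_mem_left _ _ (Ideal.subset_span ⟨_, hI, hf, rfl⟩)

end Homogenization

theorem homIdeal_mono {I J : Ideal (MvPowerSeries (Fin n) A)} (h : I ≤ J) :
    homIdeal I ≤ homIdeal J :=
  Ideal.span_mono fun _ ⟨f, hf, hf0, hF⟩ => ⟨f, h hf, hf0, hF⟩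

open Homogenization in
theorem stmt9_general [IsLocalRing A] (hreg : IsCompleteRegularLocal A)
    (I J : Ideal (MvPowerSeries (Fin n) A)) :
    homIdeal (I ⊓ J) = homIdeal I ⊓ homIdeal J := by
  have : IsNoetherianRing A := hreg.1
  refine le_antisymm (le_inf (homIdeal_mono inf_le_left) (homIdeal_mono inf_le_right))
    fun G hG => mem_of_forall_component_mem fun e => ?_
  exact mem_homIdeal_of_isHomogeneous (isHomogeneous_component e G)
    ⟨dehomogenize_component_mem hG.1 e, dehomogenize_component_mem hG.2 e⟩

/-- `hom(I ∩ J) = hom(I) ∩ hom(J)` for ideals `I, J ⊆ S = A[[x₁,…,xₙ]]`. -/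
theorem stmt9 [IsLocalRing A] (hreg : IsCompleteRegularLocal A)
    (hA : ContainsFieldOrUnramified A) (I J : Ideal (MvPowerSeries (Fin n) A)) :
    homIdeal (I ⊓ J) = homIdeal I ⊓ homIdeal J :=
  stmt9_general hreg I J

end
end

section
/- Let (A, m) be a Noetherian complete local ring with dim(A) ≥ 2, and suppose there exists x ∈ m that is not in any minimal prime of A and generates a radical ideal. Then the punctured spectrum Spec(A) ∖ {m} is connected. -/
open IsLocalRing

section Aux

variable {A : Type*} [CommRing A] [IsNoetherianRing A] [IsLocalRing A]

/-- Nakayama's lemma for ideals in a Noetherian local ring, in the form we need. -/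
lemma stmt15_nakayama (x : A) (hx : x ∈ maximalIdeal A) (N : Ideal A)
    (h : N ≤ Ideal.span {x} * N) : N = ⊥ := by
  apply Submodule.eq_bot_of_le_smul_of_le_jacobson_bot (maximalIdeal A) N
    (IsNoetherian.noetherian N)
  · refine h.trans ?_
    rw [Ideal.smul_eq_mul]
    exact Ideal.mul_mono_left (by rwa [Ideal.span_le, Set.singleton_subset_iff])
  · rw [IsLocalRing.jacobson_eq_maximalIdeal (⊥ : Ideal A) bot_ne_top]

omit [IsNoetherianRing A] in
/-- From `2 ≤ ringKrullDim A` extract a chain `a < b < maximalIdeal A` of primes. -/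
lemma stmt15_chain (hdim : 2 ≤ ringKrullDim A) :
    ∃ a b : Ideal A, a.IsPrime ∧ b.IsPrime ∧ a < b ∧ b < maximalIdeal A := by
  have hex : ∃ p : LTSeries (PrimeSpectrum A), 2 ≤ p.length := by
    by_contra hcon
    push_neg at hcon
    have hle : ringKrullDim A ≤ 1 := by
      rw [ringKrullDim, Order.krullDim]
      apply iSup_le
      intro p
      have : p.length ≤ 1 := Nat.lt_succ_iff.mp (hcon p)
      exact_mod_cast this
    have : (2 : WithBot ℕ∞) ≤ 1 := hdim.trans hle
    norm_num at this
  obtain ⟨p, hp⟩ := hex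
  have h01 : p ⟨0, by omega⟩ < p ⟨1, by omega⟩ := p.strictMono (by simp [Fin.lt_def])
  have h12 : p ⟨1, by omega⟩ < p ⟨2, by omega⟩ := p.strictMono (by simp [Fin.lt_def])
  refine ⟨(p ⟨0, by omega⟩).asIdeal, (p ⟨1, by omega⟩).asIdeal,
    (p ⟨0, by omega⟩).2, (p ⟨1, by omega⟩).2, h01, lt_of_lt_of_le h12 ?_⟩
  exact IsLocalRing.le_maximalIdeal (p ⟨2, by omega⟩).2.ne_top

end Aux

/-- Let `(A, m)` be a Noetherian complete local ring with
`dim A ≥ 2`, and suppose there is `x ∈ m` lying in no minimal prime of `A` and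
generating a radical ideal. Then the punctured spectrum `Spec(A) ∖ {m}` is connected. -/
theorem stmt15 {A : Type*} [CommRing A] [IsNoetherianRing A] [IsLocalRing A]
    [IsAdicComplete (maximalIdeal A) A]
    (hdim : 2 ≤ ringKrullDim A)
    (x : A) (hx : x ∈ maximalIdeal A)
    (hmin : ∀ p ∈ minimalPrimes A, x ∉ p)
    (hrad : (Ideal.span {x}).radical = Ideal.span {x}) :
    IsConnected {p : PrimeSpectrum A | p.asIdeal ≠ maximalIdeal A} := by
  have hXle : Ideal.span {x} ≤ maximalIdeal A := by
    rwa [Ideal.span_le, Set.singleton_subset_iff]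
  obtain ⟨a, b, ha, hb, hab, hbm⟩ := stmt15_chain hdim
  have hminprime : ∀ p ∈ minimalPrimes A, p.IsPrime := fun p hp => hp.1.1
  -- no minimal prime of A is the maximal ideal
  have hminne : ∀ p ∈ minimalPrimes A, p ≠ maximalIdeal A := by
    intro p hp hpm
    have h1 : p ≤ a := hp.2 ⟨ha, bot_le⟩ (by
      rw [hpm]; exact (hab.trans hbm).le)
    rw [hpm] at h1
    exact absurd (lt_of_le_of_lt h1 (hab.trans hbm)) (lt_irrefl _)
  -- the maximal ideal is not a minimal prime over (x)
  have hBm : maximalIdeal A ∉ (Ideal.span {x}).minimalPrimes := by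
    intro hm'
    have hall : ∀ q : Ideal A, q.IsPrime → Ideal.span {x} ≤ q → q = maximalIdeal A := by
      intro q hq hXq
      have hqm : q ≤ maximalIdeal A := IsLocalRing.le_maximalIdeal hq.ne_top
      exact le_antisymm hqm (hm'.2 ⟨hq, hXq⟩ hqm)
    have hradm : (Ideal.span {x}).radical = maximalIdeal A := by
      rw [Ideal.radical_eq_sInf]
      apply le_antisymm
      · exact sInf_le ⟨hXle, inferInstance⟩
      · apply le_sInf
        rintro q ⟨hXq, hq⟩
        exact (hall q hq hXq).ge
    have hXm : Ideal.span {x} = maximalIdeal A := by rw [← hrad, hradm]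
    have hxb : x ∉ b := by
      intro hxb
      exact absurd (hall b hb (by rwa [Ideal.span_le, Set.singleton_subset_iff])) hbm.ne
    have hble : b ≤ Ideal.span {x} * b := by
      intro f hf
      have hfX : f ∈ Ideal.span {x} := by rw [hXm]; exact hbm.le hf
      obtain ⟨c, hc⟩ := Ideal.mem_span_singleton'.mp hfX
      have hcb : c ∈ b := by
        rcases hb.mem_or_mem (show c * x ∈ b by rw [hc]; exact hf) with h | h
        · exact h
        · exact absurd h hxb
      rw [← hc, mul_comm c x]
      exact Ideal.mul_mem_mul (Ideal.mem_span_singleton_self x) hcb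
    have hbbot := stmt15_nakayama x hx b hble
    rw [hbbot] at hab
    exact absurd hab (not_lt_bot)
  -- a point of the punctured spectrum over (x)
  obtain ⟨q0, hq0Q, hq0le⟩ := Ideal.exists_minimalPrimes_le (J := maximalIdeal A) hXle
  have hq0m : q0 ≠ maximalIdeal A := fun h => hBm (h ▸ hq0Q)
  -- A is reduced
  have hred : (⊥ : Ideal A).radical = ⊥ := by
    have hNle : (⊥ : Ideal A).radical ≤ Ideal.span {x} :=
      (Ideal.radical_mono bot_le).trans hrad.le
    have hle : (⊥ : Ideal A).radical ≤ Ideal.span {x} * (⊥ : Ideal A).radical := by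
      intro f hf
      obtain ⟨c, hc⟩ := Ideal.mem_span_singleton'.mp (hNle hf)
      have hcN : c ∈ (⊥ : Ideal A).radical := by
        rw [← Ideal.sInf_minimalPrimes, Ideal.mem_sInf]
        intro p hp
        have hfp : f ∈ p := by
          rw [← Ideal.sInf_minimalPrimes, Ideal.mem_sInf] at hf
          exact hf hp
        exact ((hminprime p hp).mem_or_mem (show c * x ∈ p by rw [hc]; exact hfp)).resolve_right
          (hmin p hp)
      rw [← hc, mul_comm c x]
      exact Ideal.mul_mem_mul (Ideal.mem_span_singleton_self x) hcN
    exact stmt15_nakayama x hx _ hle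
  -- x is a nonzerodivisor
  have hxnzd : ∀ z : A, z * x = 0 → z = 0 := by
    intro z hz
    have hzN : z ∈ (⊥ : Ideal A).radical := by
      rw [← Ideal.sInf_minimalPrimes, Ideal.mem_sInf]
      intro p hp
      have : z * x ∈ p := by rw [hz]; exact p.zero_mem
      exact ((hminprime p hp).mem_or_mem this).resolve_right (hmin p hp)
    rw [hred] at hzN
    exact hzN
  have hxpow : ∀ (k : ℕ) (z : A), z * x ^ k = 0 → z = 0 := by
    intro k
    induction k with
    | zero => intro z hz; simpa using hz
    | succ n ih =>
      intro z hz
      refine ih z (hxnzd (z * x ^ n) ?_)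
      rw [mul_assoc, ← pow_succ]
      exact hz
  -- finiteness of the relevant prime families
  have hMinfin : (minimalPrimes A).Finite := minimalPrimes.finite_of_isNoetherianRing A
  have hQfin : (Ideal.span {x}).minimalPrimes.Finite := by
    rw [Ideal.minimalPrimes_eq_comap]
    exact (minimalPrimes.finite_of_isNoetherianRing (A ⧸ Ideal.span {x})).image _
  -- choose y in m avoiding all minimal primes of A and of (x)
  obtain ⟨y, hym, hyMin, hyQ⟩ : ∃ y ∈ maximalIdeal A,
      (∀ p ∈ minimalPrimes A, y ∉ p) ∧ ∀ q ∈ (Ideal.span {x}).minimalPrimes, y ∉ q := by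
    classical
    have hSfin : (minimalPrimes A ∪ (Ideal.span {x}).minimalPrimes).Finite :=
      hMinfin.union hQfin
    have hprimes : ∀ p ∈ minimalPrimes A ∪ (Ideal.span {x}).minimalPrimes, p.IsPrime := by
      rintro p (hp | hp)
      · exact hp.1.1
      · exact hp.1.1
    have hnot : ¬ ((maximalIdeal A : Set A) ⊆ ⋃ p ∈ (hSfin.toFinset : Set (Ideal A)), ↑p) := by
      intro hsub
      obtain ⟨p, hpT, hple⟩ := (Ideal.subset_union_prime (⊥ : Ideal A) (⊥ : Ideal A)
        (fun i hi _ _ => hprimes i (hSfin.mem_toFinset.mp hi))).mp hsub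
      have hpS := hSfin.mem_toFinset.mp hpT
      have hpm : p = maximalIdeal A :=
        le_antisymm (IsLocalRing.le_maximalIdeal (hprimes p hpS).ne_top) hple
      rcases hpS with hp | hp
      · exact hminne p hp hpm
      · exact hBm (hpm ▸ hp)
    rw [Set.not_subset] at hnot
    obtain ⟨y, hym, hy⟩ := hnot
    refine ⟨y, hym, fun p hp hyp => hy ?_, fun q hq hyq => hy ?_⟩
    · exact Set.mem_biUnion (show p ∈ (hSfin.toFinset : Set (Ideal A)) by
        rw [Finset.mem_coe, Set.Finite.mem_toFinset]; exact Or.inl hp) hyp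
    · exact Set.mem_biUnion (show q ∈ (hSfin.toFinset : Set (Ideal A)) by
        rw [Finset.mem_coe, Set.Finite.mem_toFinset]; exact Or.inr hq) hyq
  -- y is a nonzerodivisor modulo (x)
  have hstar0 : ∀ z : A, z * y ∈ Ideal.span {x} → z ∈ Ideal.span {x} := by
    intro z hz
    have : z ∈ (Ideal.span {x}).radical := by
      rw [← Ideal.sInf_minimalPrimes, Ideal.mem_sInf]
      intro q hq
      exact ((hq.1.1).mem_or_mem (hq.1.2 hz)).resolve_right (hyQ q hq)
    rwa [hrad] at this
  have hstar1 : ∀ (k : ℕ) (z : A), z * y ^ k ∈ Ideal.span {x} → z ∈ Ideal.span {x} := by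
    intro k
    induction k with
    | zero => intro z hz; simpa using hz
    | succ n ih =>
      intro z hz
      refine ih z (hstar0 (z * y ^ n) ?_)
      rw [mul_assoc, ← pow_succ]
      exact hz
  -- x^k, y^M regular-sequence property
  have hstar : ∀ (k M : ℕ) (z : A),
      z * y ^ M ∈ Ideal.span {x ^ k} → z ∈ Ideal.span {x ^ k} := by
    intro k
    induction k with
    | zero => intro M z _; simp [Ideal.span_singleton_one]
    | succ k ih =>
      intro M z hz
      obtain ⟨c, hc⟩ := Ideal.mem_span_singleton'.mp hz
      have h1 : z * y ^ M ∈ Ideal.span {x ^ k} :=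
        Ideal.mem_span_singleton'.mpr ⟨c * x, by rw [← hc, pow_succ]; ring⟩
      obtain ⟨w, hw⟩ := Ideal.mem_span_singleton'.mp (ih M z h1)
      have h3 : (w * y ^ M - c * x) * x ^ k = 0 := by
        have h : (w * x ^ k) * y ^ M = c * x ^ (k + 1) := by rw [hw, hc]
        linear_combination h
      have h4 : w * y ^ M = c * x := sub_eq_zero.mp (hxpow k _ h3)
      obtain ⟨d, hd⟩ := Ideal.mem_span_singleton'.mp
        (hstar1 M w (h4 ▸ Ideal.mem_span_singleton'.mpr ⟨c, rfl⟩))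
      exact Ideal.mem_span_singleton'.mpr ⟨d, by rw [← hw, ← hd, pow_succ]; ring⟩
  -- the punctured spectrum
  constructor
  · exact ⟨⟨q0, hq0Q.1.1⟩, hq0m⟩
  intro u v hu hv hsuv hsu hsv
  by_contra hne
  have hdisj : ∀ r, r ∈ {p : PrimeSpectrum A | p.asIdeal ≠ maximalIdeal A} →
      r ∈ u → r ∈ v → False := fun r hr h1 h2 => hne ⟨r, hr, h1, h2⟩
  obtain ⟨Pu, hPus, hPuu⟩ := hsu
  obtain ⟨Pv, hPvs, hPvv⟩ := hsv
  -- specialization stays on the same side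
  have key : ∀ (w w' : Set (PrimeSpectrum A)), IsOpen w' →
      ({p : PrimeSpectrum A | p.asIdeal ≠ maximalIdeal A} ⊆ w ∪ w') →
      (∀ r, r ∈ {p : PrimeSpectrum A | p.asIdeal ≠ maximalIdeal A} → r ∈ w → r ∈ w' → False) →
      ∀ P R : PrimeSpectrum A, P ∈ {p : PrimeSpectrum A | p.asIdeal ≠ maximalIdeal A} →
        R ∈ {p : PrimeSpectrum A | p.asIdeal ≠ maximalIdeal A} →
        P.asIdeal ≤ R.asIdeal → P ∈ w → R ∈ w := by
    intro w w' hw' hcov hd P R hP hR hle hPw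
    rcases hcov hR with h | h
    · exact h
    · exact absurd hPw
        (fun hPw => hd P hP hPw (((PrimeSpectrum.le_iff_specializes P R).mp hle).mem_open hw' h))
  have hcov' : {p : PrimeSpectrum A | p.asIdeal ≠ maximalIdeal A} ⊆ v ∪ u :=
    fun r hr => (hsuv hr).symm
  have hdisj' : ∀ r, r ∈ {p : PrimeSpectrum A | p.asIdeal ≠ maximalIdeal A} →
      r ∈ v → r ∈ u → False := fun r hr h2 h1 => hdisj r hr h1 h2
  -- every point of the punctured spectrum has a minimal prime below it, in the spectrum
  have hbelow : ∀ R : PrimeSpectrum A, R.asIdeal ≠ maximalIdeal A →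
      ∃ P : PrimeSpectrum A, P.asIdeal ∈ minimalPrimes A ∧
        P.asIdeal ≠ maximalIdeal A ∧ P.asIdeal ≤ R.asIdeal := by
    intro R hR
    haveI := R.2
    obtain ⟨p, hp, hple⟩ := Ideal.exists_minimalPrimes_le (I := (⊥ : Ideal A))
      (J := R.asIdeal) bot_le
    exact ⟨⟨p, hp.1.1⟩, hp, hminne p hp, hple⟩
  -- minimal primes on each side
  obtain ⟨P1, hP1min, hP1s, hP1le⟩ := hbelow Pu hPus
  have hP1u : P1 ∈ u := by
    rcases hsuv hP1s with h | h
    · exact h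
    · exact absurd (key v u hu hcov' hdisj' P1 Pu hP1s hPus hP1le h)
        (fun hPuv => hdisj Pu hPus hPuu hPuv)
  obtain ⟨P2, hP2min, hP2s, hP2le⟩ := hbelow Pv hPvs
  have hP2v : P2 ∈ v := by
    rcases hsuv hP2s with h | h
    · exact absurd (key u v hv hsuv hdisj P2 Pv hP2s hPvs hP2le h)
        (fun hPvu => hdisj Pv hPvs hPvu hPvv)
    · exact h
  -- the two side ideals
  set Mu : Set (Ideal A) :=
    PrimeSpectrum.asIdeal '' {P : PrimeSpectrum A | P.asIdeal ∈ minimalPrimes A ∧ P ∈ u} with hMu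
  set Mv : Set (Ideal A) :=
    PrimeSpectrum.asIdeal '' {P : PrimeSpectrum A | P.asIdeal ∈ minimalPrimes A ∧ P ∈ v} with hMv
  have hMuMin : Mu ⊆ minimalPrimes A := by rintro _ ⟨P, ⟨hP, _⟩, rfl⟩; exact hP
  have hMvMin : Mv ⊆ minimalPrimes A := by rintro _ ⟨P, ⟨hP, _⟩, rfl⟩; exact hP
  -- finite-intersection-of-primes lemma
  have hFIN : ∀ S : Set (Ideal A), S.Finite → (∀ p ∈ S, p.IsPrime) →
      ∀ r : Ideal A, r.IsPrime → sInf S ≤ r → ∃ p ∈ S, p ≤ r := by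
    intro S hS hSp r hr hle
    classical
    have h : hS.toFinset.inf id ≤ r := by
      rw [Finset.inf_id_eq_sInf, hS.coe_toFinset]
      exact hle
    obtain ⟨i, hi, hir⟩ := (Ideal.IsPrime.inf_le' hr).mp h
    exact ⟨i, hS.mem_toFinset.mp hi, hir⟩
  -- m is the only prime over J1 ⊔ J2
  have hrad12 : maximalIdeal A ≤ (sInf Mu ⊔ sInf Mv).radical := by
    rw [Ideal.radical_eq_sInf]
    apply le_sInf
    rintro r ⟨hler, hrp⟩
    by_cases hrm : r = maximalIdeal A
    · exact hrm.ge
    · exfalso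
      obtain ⟨p, hpMu, hpr⟩ := hFIN Mu (hMinfin.subset hMuMin)
        (fun p hp => hminprime p (hMuMin hp)) r hrp (le_sup_left.trans hler)
      obtain ⟨P, ⟨hPmin, hPu⟩, rfl⟩ := hpMu
      obtain ⟨q, hqMv, hqr⟩ := hFIN Mv (hMinfin.subset hMvMin)
        (fun p hp => hminprime p (hMvMin hp)) r hrp (le_sup_right.trans hler)
      obtain ⟨Q, ⟨hQmin, hQv⟩, rfl⟩ := hqMv
      have hRu : (⟨r, hrp⟩ : PrimeSpectrum A) ∈ u :=
        key u v hv hsuv hdisj P ⟨r, hrp⟩ (hminne _ hPmin) hrm hpr hPu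
      have hRv : (⟨r, hrp⟩ : PrimeSpectrum A) ∈ v :=
        key v u hu hcov' hdisj' Q ⟨r, hrp⟩ (hminne _ hQmin) hrm hqr hQv
      exact hdisj ⟨r, hrp⟩ hrm hRu hRv
  obtain ⟨n, hn⟩ : ∃ n : ℕ, (maximalIdeal A) ^ n ≤ sInf Mu ⊔ sInf Mv :=
    Ideal.exists_pow_le_of_le_radical_of_fg hrad12 (IsNoetherian.noetherian _)
  -- intersection of the side ideals is zero
  have hJbot : sInf Mu ⊓ sInf Mv ≤ ⊥ := by
    rw [← hred, ← Ideal.sInf_minimalPrimes]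
    apply le_sInf
    intro p hp
    have hps : (⟨p, hp.1.1⟩ : PrimeSpectrum A).asIdeal ≠ maximalIdeal A := hminne p hp
    rcases hsuv hps with h | h
    · exact inf_le_left.trans (sInf_le ⟨⟨p, hp.1.1⟩, ⟨hp, h⟩, rfl⟩)
    · exact inf_le_right.trans (sInf_le ⟨⟨p, hp.1.1⟩, ⟨hp, h⟩, rfl⟩)
  -- decompose x^n and y^n
  obtain ⟨a1, ha1, b1, hb1, hsum1⟩ := Submodule.mem_sup.mp (hn (Ideal.pow_mem_pow hx n))
  obtain ⟨a2, ha2, b2, hb2, hsum2⟩ := Submodule.mem_sup.mp (hn (Ideal.pow_mem_pow hym n))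
  have hz1 : a1 * b2 = 0 := by
    have : a1 * b2 ∈ sInf Mu ⊓ sInf Mv :=
      ⟨Ideal.mul_mem_right _ _ ha1, Ideal.mul_mem_left _ _ hb2⟩
    simpa using hJbot this
  have hz2 : a2 * b1 = 0 := by
    have : a2 * b1 ∈ sInf Mu ⊓ sInf Mv :=
      ⟨Ideal.mul_mem_right _ _ ha2, Ideal.mul_mem_left _ _ hb1⟩
    simpa using hJbot this
  have hkey : a1 * y ^ n = a2 * x ^ n := by
    linear_combination a2 * hsum1 - a1 * hsum2 + hz1 - hz2
  obtain ⟨t, ht⟩ := Ideal.mem_span_singleton'.mp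
    (hstar n n a1 (Ideal.mem_span_singleton'.mpr ⟨a2, hkey.symm⟩))
  have h6 : (t * y ^ n - a2) * x ^ n = 0 := by
    linear_combination y ^ n * ht + hkey
  have ha2t : a2 = t * y ^ n := (sub_eq_zero.mp (hxpow n _ h6)).symm
  -- hence b2 = (1 - t) * y^n, so 1 - t lies in a v-side minimal prime, so t is a unit
  have hb2eq : b2 = (1 - t) * y ^ n := by linear_combination hsum2 - ha2t
  have h1t : (1 - t) ∈ P2.asIdeal := by
    have hb2p : b2 ∈ P2.asIdeal :=
      (sInf_le ⟨P2, ⟨hP2min, hP2v⟩, rfl⟩ : sInf Mv ≤ P2.asIdeal) hb2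
    rw [hb2eq] at hb2p
    exact (P2.2.mem_or_mem hb2p).resolve_right
      (fun h => hyMin P2.asIdeal hP2min (P2.2.mem_of_pow_mem n h))
  have htunit : IsUnit t := by
    by_contra hnt
    have htm : t ∈ maximalIdeal A := by
      rw [IsLocalRing.mem_maximalIdeal, mem_nonunits_iff]; exact hnt
    have h1m : (1 : A) ∈ maximalIdeal A := by
      have h2 : (1 - t) ∈ maximalIdeal A :=
        IsLocalRing.le_maximalIdeal P2.2.ne_top h1t
      have := add_mem htm h2
      rwa [add_sub_cancel] at this
    exact (Ideal.ne_top_iff_one _).mp (IsLocalRing.maximalIdeal.isMaximal A).ne_top h1m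
  obtain ⟨tu, htt'⟩ := htunit.exists_left_inv
  have hxnJ1 : x ^ n ∈ sInf Mu := by
    have he : tu * a1 = x ^ n := by rw [← ht, ← mul_assoc, htt', one_mul]
    rw [← he]
    exact Ideal.mul_mem_left _ _ ha1
  have hxP1 : x ^ n ∈ P1.asIdeal :=
    (sInf_le ⟨P1, ⟨hP1min, hP1u⟩, rfl⟩ : sInf Mu ≤ P1.asIdeal) hxnJ1
  exact hmin P1.asIdeal hP1min (P1.2.mem_of_pow_mem n hxP1)
end

section
/- Let A be a Noetherian ring and a an ideal of A. For h ∈ ℕ, the set a_{>h} = { x ∈ A : height(a :_A x) > h } is an ideal of A, and it equals the intersection of the primary components of a of height at most h (in any primary decomposition of a). -/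
noncomputable section
open scoped Classical

/-- The height of an ideal `I`: the infimum of the heights of the primes containing
`I` (so `height ⊤ = ⊤`, the empty infimum). -/
def idealHeight {A : Type*} [CommRing A] (I : Ideal A) : ℕ∞ :=
  ⨅ p : {p : PrimeSpectrum A // I ≤ p.asIdeal}, Order.height p.1

/-! Colon ideals commute with finite intersections: `(a : x) = ⋂ᵢ (qᵢ : x)`. For a primary `q`,
`(q : x)` is `A` when `x ∈ q` and has radical `√q` otherwise. The height of an ideal only
depends on its radical, and that of a finite intersection is the minimum of the heights, so
`height (a : x) > h` exactly when `x` lies in every `qᵢ` with `height √qᵢ ≤ h`. -/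

section idealHeight

variable {A : Type*} [CommRing A]

theorem idealHeight_mono {I J : Ideal A} (hIJ : I ≤ J) : idealHeight I ≤ idealHeight J :=
  le_iInf fun p ↦ iInf_le (fun p : {p : PrimeSpectrum A // I ≤ p.asIdeal} ↦ Order.height p.1)
    ⟨p.1, hIJ.trans p.2⟩

theorem idealHeight_le_height {I : Ideal A} {p : PrimeSpectrum A} (hp : I ≤ p.asIdeal) :
    idealHeight I ≤ Order.height p :=
  iInf_le (fun p : {p : PrimeSpectrum A // I ≤ p.asIdeal} ↦ Order.height p.1) ⟨p, hp⟩

@[simp]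
theorem idealHeight_top : idealHeight (⊤ : Ideal A) = ⊤ := by
  have : IsEmpty {p : PrimeSpectrum A // ⊤ ≤ p.asIdeal} :=
    ⟨fun p ↦ p.1.isPrime.ne_top (top_le_iff.mp p.2)⟩
  exact iInf_of_empty _

@[simp]
theorem idealHeight_radical (I : Ideal A) : idealHeight I.radical = idealHeight I :=
  le_antisymm (le_iInf fun p ↦ idealHeight_le_height (p.1.isPrime.radical_le_iff.mpr p.2))
    (idealHeight_mono I.le_radical)

theorem idealHeight_finsetInf {ι : Type*} (s : Finset ι) (f : ι → Ideal A) :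
    idealHeight (s.inf f) = s.inf (idealHeight ∘ f) := by
  refine le_antisymm (Finset.le_inf fun i hi ↦ idealHeight_mono (Finset.inf_le hi))
    (le_iInf fun p ↦ ?_)
  obtain ⟨i, hi, hfi⟩ := p.1.isPrime.inf_le'.mp p.2
  exact (Finset.inf_le hi).trans (idealHeight_le_height hfi)

theorem Ideal.IsPrimary.idealHeight_colon_span_singleton {q : Ideal A} (hq : q.IsPrimary)
    (x : A) :
    idealHeight (q.colon (Ideal.span {x})) = if x ∈ q then ⊤ else idealHeight q.radical := by
  rw [← idealHeight_radical, Ideal.colon_span, hq.radical_colon_singleton_eq_ite,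
    Submodule.colon_univ]
  split_ifs <;> simp

end idealHeight

theorem stmt16_general {A : Type*} [CommRing A] (a : Ideal A) (h : ℕ)
    (Q : Finset (Ideal A)) (hQ : ∀ q ∈ Q, q.IsPrimary)
    (hdec : a = sInf (Q : Set (Ideal A))) :
    {x : A | (h : ℕ∞) < idealHeight (a.colon (Ideal.span {x}))} =
      ↑(sInf {q : Ideal A | q ∈ Q ∧ idealHeight q.radical ≤ (h : ℕ∞)}) := by
  ext x
  simp only [Set.mem_ofPred_eq, SetLike.mem_coe, Ideal.mem_sInf, and_imp]
  rw [hdec, ← Finset.inf_id_eq_sInf, Submodule.colon_finsetInf, idealHeight_finsetInf,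
    Finset.lt_inf_iff (ENat.natCast_lt_top h)]
  refine forall₂_congr fun q hq ↦ ?_
  rw [Function.comp_apply, id, (hQ q hq).idealHeight_colon_span_singleton]
  by_cases hx : x ∈ q <;> simp [hx]

/-- Let `A` be Noetherian, `a ⊆ A` an ideal, `h ∈ ℕ`.  Given an
irredundant primary decomposition `a = ⋂ Q`, the set
`a_{>h} = { x : height (a : x) > h }` equals (hence is an ideal) the intersection of
the primary components of `a` of height at most `h` (the empty intersection being `A`). -/
theorem stmt16 {A : Type*} [CommRing A] [IsNoetherianRing A] (a : Ideal A) (h : ℕ)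
    (Q : Finset (Ideal A)) (hQ : ∀ q ∈ Q, q.IsPrimary)
    (hdec : a = sInf (Q : Set (Ideal A)))
    (hirr : ∀ q ∈ Q, a ≠ sInf ((Q.erase q : Finset (Ideal A)) : Set (Ideal A)))
    (hrad : ∀ q ∈ Q, ∀ q' ∈ Q, q ≠ q' → q.radical ≠ q'.radical) :
    {x : A | (h : ℕ∞) < idealHeight (a.colon (Ideal.span {x}))} =
      ↑(sInf {q : Ideal A | q ∈ Q ∧ idealHeight q.radical ≤ (h : ℕ∞)}) :=
  stmt16_general a h Q hQ hdec

end
end
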